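/- arXiv:math/0310326 — 5 statements merged into one kernel-verified Lean document; each statement's English description precedes it below -/
import Mathlib

section
/- For all positive integers m, n and all integers j, k with 1 ≤ j ≤ m and 1 ≤ k ≤ n, the vector f_{j,k} defined on the vertices of the m×n grid graph by f_{j,k}(x,y) = sin(πj(x+1)/(m+1))·sin(πk(y+1)/(n+1)) (for 0 ≤ x ≤ m−1, 0 ≤ y ≤ n−1) is an eigenvector of the Kasteleyn matrix K of the grid graph, with eigenvalue λ_{j,k} = 2cos(πj/(m+1)) + 2i·cos(πk/(n+1)). That is, for every vertex u, Σ_v K(u,v) f_{j,k}(v) = λ_{j,k} f_{j,k}(u). -/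
/-- The m×n grid graph on vertex set Fin m × Fin n: (x,y) ~ (x',y') iff |x-x'|+|y-y'| = 1. -/
def gridGraph (m n : ℕ) : SimpleGraph (Fin m × Fin n) :=
  SimpleGraph.fromRel (fun u v =>
    (u.1 = v.1 ∧ u.2.val + 1 = v.2.val) ∨ (u.2 = v.2 ∧ u.1.val + 1 = v.1.val))

/-- The Kasteleyn matrix of the m×n grid graph: horizontal edges weighted 1,
vertical edges weighted i, all other entries 0. -/
def kasteleyn (m n : ℕ) : Matrix (Fin m × Fin n) (Fin m × Fin n) ℂ :=
  Matrix.of fun u v =>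
    if u.2 = v.2 ∧ (u.1.val + 1 = v.1.val ∨ v.1.val + 1 = u.1.val) then 1
    else if u.1 = v.1 ∧ (u.2.val + 1 = v.2.val ∨ v.2.val + 1 = u.2.val) then Complex.I
    else 0

lemma helperSum (m : ℕ) (a : Fin m) (g : ℕ → ℂ) (h0 : g 0 = 0) (hm1 : g (m+1) = 0) :
    ∑ x : Fin m, (if x.val + 1 = a.val ∨ a.val + 1 = x.val then g (x.val+1) else 0)
      = g a.val + g (a.val+2) := by
  have split : ∀ x : Fin m, (if x.val + 1 = a.val ∨ a.val + 1 = x.val then g (x.val+1) else 0)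
      = (if x.val + 1 = a.val then g a.val else 0)
        + (if x.val = a.val + 1 then g (a.val+2) else 0) := by
    intro x
    by_cases h1 : x.val + 1 = a.val
    · have h2 : ¬ x.val = a.val + 1 := by omega
      rw [if_pos (Or.inl h1), if_pos h1, if_neg h2, h1, add_zero]
    · by_cases h2 : a.val + 1 = x.val
      · have h3 : x.val + 1 = a.val + 2 := by omega
        have h4 : x.val = a.val + 1 := by omega
        rw [if_pos (Or.inr h2), if_neg h1, if_pos h4, h3, zero_add]
      · have h3 : ¬ x.val = a.val + 1 := by omega
        rw [if_neg (fun h => h.elim h1 h2), if_neg h1, if_neg h3, add_zero]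
  rw [Finset.sum_congr rfl (fun x _ => split x), Finset.sum_add_distrib]
  congr 1
  · rcases Nat.eq_zero_or_pos a.val with h | h
    · have hne : ∀ x : Fin m, ¬ (x.val + 1 = a.val) := by intro x; omega
      rw [Finset.sum_congr rfl (fun x _ => if_neg (hne x)), Finset.sum_const_zero, h, h0]
    · obtain ⟨s, hs⟩ : ∃ s, a.val = s + 1 := ⟨a.val - 1, by omega⟩
      have hsm : s < m := by omega
      have he : ∀ x : Fin m, (x.val + 1 = a.val) ↔ (x = ⟨s, hsm⟩) := by
        intro x; simp only [Fin.ext_iff, Fin.val_mk]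
        try omega
      rw [Finset.sum_congr rfl (fun x _ => by rw [if_congr (he x) rfl rfl])]
      simp
  · by_cases h : a.val + 1 < m
    · have he : ∀ x : Fin m, (x.val = a.val + 1) ↔ (x = ⟨a.val + 1, h⟩) := by
        intro x; simp only [Fin.ext_iff, Fin.val_mk]
        try omega
      rw [Finset.sum_congr rfl (fun x _ => by rw [if_congr (he x) rfl rfl])]
      simp
    · have hne : ∀ x : Fin m, ¬ (x.val = a.val + 1) := by
        intro x; have := x.isLt; omega
      have hm : a.val + 2 = m + 1 := by have := a.isLt; omega
      rw [Finset.sum_congr rfl (fun x _ => if_neg (hne x)), Finset.sum_const_zero, hm, hm1]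

/-- For 1 ≤ j ≤ m, 1 ≤ k ≤ n, the vector f(x,y) = sin(πj(x+1)/(m+1))·sin(πk(y+1)/(n+1))
is an eigenvector of the Kasteleyn matrix with eigenvalue
2cos(πj/(m+1)) + 2i·cos(πk/(n+1)). -/
theorem kasteleyn_eigenvector (m n : ℕ) (hm : 0 < m) (hn : 0 < n)
    (j k : ℕ) (hj1 : 1 ≤ j) (hjm : j ≤ m) (hk1 : 1 ≤ k) (hkn : k ≤ n)
    (f : Fin m × Fin n → ℂ)
    (hf : ∀ v : Fin m × Fin n,
      f v = (Real.sin (Real.pi * j * (v.1.val + 1) / (m + 1)) : ℂ) *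
            (Real.sin (Real.pi * k * (v.2.val + 1) / (n + 1)) : ℂ)) :
    ∀ u : Fin m × Fin n,
      ∑ v : Fin m × Fin n, kasteleyn m n u v * f v =
        ((2 * Real.cos (Real.pi * j / (m + 1)) : ℝ) +
          2 * Complex.I * (Real.cos (Real.pi * k / (n + 1)) : ℝ)) * f u := by
  have hm0 : ((m : ℝ) + 1) ≠ 0 := by positivity
  have hn0 : ((n : ℝ) + 1) ≠ 0 := by positivity
  set c1 : ℝ := Real.pi * j / (m + 1) with hc1
  set c2 : ℝ := Real.pi * k / (n + 1) with hc2
  set g1 : ℕ → ℂ := fun t => ((Real.sin (c1 * t) : ℝ) : ℂ) with hg1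
  set g2 : ℕ → ℂ := fun t => ((Real.sin (c2 * t) : ℝ) : ℂ) with hg2
  have hfv : ∀ v : Fin m × Fin n, f v = g1 (v.1.val + 1) * g2 (v.2.val + 1) := by
    intro v
    rw [hf]
    have hA : Real.pi * j * (v.1.val + 1) / (m + 1) = c1 * ((v.1.val + 1 : ℕ) : ℝ) := by
      rw [hc1]; push_cast; ring
    have hB : Real.pi * k * (v.2.val + 1) / (n + 1) = c2 * ((v.2.val + 1 : ℕ) : ℝ) := by
      rw [hc2]; push_cast; ring
    rw [hA, hB]
  have hg10 : g1 0 = 0 := by simp [hg1]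
  have hg20 : g2 0 = 0 := by simp [hg2]
  have hg1m : g1 (m+1) = 0 := by
    simp only [hg1]
    have h : c1 * ((m + 1 : ℕ) : ℝ) = (j : ℝ) * Real.pi := by
      rw [hc1]; push_cast; field_simp
    rw [h, Real.sin_nat_mul_pi]
    simp
  have hg2n : g2 (n+1) = 0 := by
    simp only [hg2]
    have h : c2 * ((n + 1 : ℕ) : ℝ) = (k : ℝ) * Real.pi := by
      rw [hc2]; push_cast; field_simp
    rw [h, Real.sin_nat_mul_pi]
    simp
  have htrig : ∀ (c : ℝ) (t : ℕ),
      Real.sin (c * t) + Real.sin (c * ((t : ℝ) + 2)) = 2 * Real.cos c * Real.sin (c * ((t : ℝ) + 1)) := by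
    intro c t
    rw [show c * (t : ℝ) = c * ((t : ℝ) + 1) - c by ring,
        show c * ((t : ℝ) + 2) = c * ((t : ℝ) + 1) + c by ring,
        Real.sin_sub, Real.sin_add]
    ring
  intro u
  obtain ⟨a, b⟩ := u
  have hT1 : g1 a.val + g1 (a.val + 2) = ((2 * Real.cos c1 : ℝ) : ℂ) * g1 (a.val + 1) := by
    simp only [hg1]
    exact_mod_cast congrArg Complex.ofReal (htrig c1 a.val)
  have hT2 : g2 b.val + g2 (b.val + 2) = ((2 * Real.cos c2 : ℝ) : ℂ) * g2 (b.val + 1) := by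
    simp only [hg2]
    exact_mod_cast congrArg Complex.ofReal (htrig c2 b.val)
  have key : ∀ (x : Fin m) (y : Fin n),
      kasteleyn m n (a, b) (x, y) * f (x, y)
        = (if x.val + 1 = a.val ∨ a.val + 1 = x.val then g1 (x.val + 1) else 0)
            * (if y = b then g2 (b.val + 1) else 0)
          + Complex.I * ((if x = a then g1 (a.val + 1) else 0)
            * (if y.val + 1 = b.val ∨ b.val + 1 = y.val then g2 (y.val + 1) else 0)) := by
    intro x y
    rw [hfv]
    simp only [kasteleyn, Matrix.of_apply]
    by_cases h1 : b = y ∧ (a.val + 1 = x.val ∨ x.val + 1 = a.val)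
    · obtain ⟨hb, hx⟩ := h1
      have hxa : ¬ x = a := by rw [Fin.ext_iff]; omega
      rw [if_pos ⟨hb, hx⟩, if_pos (Or.symm hx), if_pos hb.symm, if_neg hxa, hb]
      ring
    · by_cases h2 : a = x ∧ (b.val + 1 = y.val ∨ y.val + 1 = b.val)
      · obtain ⟨ha, hy⟩ := h2
        have hax : a.val = x.val := by rw [ha]
        have h1' : ¬ (x.val + 1 = a.val ∨ a.val + 1 = x.val) := by omega
        rw [if_neg h1, if_pos ⟨ha, hy⟩, if_neg h1', if_pos ha.symm, if_pos (Or.symm hy), hax]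
        ring
      · rw [if_neg h1, if_neg h2]
        by_cases hx : x.val + 1 = a.val ∨ a.val + 1 = x.val
        · have hyb : ¬ y = b := fun h => h1 ⟨h.symm, Or.symm hx⟩
          have hxa : ¬ x = a := by
            intro h; rw [Fin.ext_iff] at h; omega
          rw [if_pos hx, if_neg hyb, if_neg hxa]
          ring
        · rw [if_neg hx]
          by_cases hxa : x = a
          · have hyv : ¬ (y.val + 1 = b.val ∨ b.val + 1 = y.val) := fun h =>
              h2 ⟨hxa.symm, Or.symm h⟩
            rw [if_pos hxa, if_neg hyv]
            ring
          · rw [if_neg hxa]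
            ring
  have S2 : (∑ y : Fin n, if y = b then g2 (b.val + 1) else 0) = g2 (b.val + 1) := by simp
  have S3 : (∑ x : Fin m, if x = a then g1 (a.val + 1) else 0) = g1 (a.val + 1) := by simp
  calc ∑ v : Fin m × Fin n, kasteleyn m n (a, b) v * f v
      = (∑ x : Fin m, if x.val + 1 = a.val ∨ a.val + 1 = x.val then g1 (x.val + 1) else 0)
          * (∑ y : Fin n, if y = b then g2 (b.val + 1) else 0)
        + Complex.I * ((∑ x : Fin m, if x = a then g1 (a.val + 1) else 0)
          * (∑ y : Fin n, if y.val + 1 = b.val ∨ b.val + 1 = y.val then g2 (y.val + 1) else 0)) := by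
        rw [Fintype.sum_prod_type]
        rw [Finset.sum_congr rfl (fun x _ => Finset.sum_congr rfl (fun y _ => key x y))]
        simp only [Finset.sum_add_distrib, ← Finset.sum_mul, ← Finset.mul_sum]
    _ = ((2 * Real.cos (Real.pi * j / (m + 1)) : ℝ) +
          2 * Complex.I * (Real.cos (Real.pi * k / (n + 1)) : ℝ)) * f (a, b) := by
        rw [helperSum m a g1 hg10 hg1m, helperSum n b g2 hg20 hg2n, S2, S3, hT1, hT2,
          hfv (a, b)]
        simp only [hc1, hc2]
        push_cast
        ring
end

section
/- For all positive integers m, n, the determinant of the Kasteleyn matrix K of the m×n grid graph equals the product ∏_{j=1}^{m} ∏_{k=1}^{n} (2cos(πj/(m+1)) + 2i·cos(πk/(n+1))). -/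
/-!
Writing `P_m` for the adjacency matrix of the path on `m` vertices, the Kasteleyn matrix is the
Kronecker sum `K = P_m ⊗ 1 + i (1 ⊗ P_n)`. The discrete sine vectors
`x ↦ sin (π j (x + 1) / (m + 1))`, `1 ≤ j ≤ m`, are eigenvectors of `P_m` with the pairwise distinct
eigenvalues `2 cos (π j / (m + 1))`, so they form an invertible matrix `S_m` with
`P_m S_m = S_m D_m`, `D_m` diagonal. Then `S_m ⊗ S_n` conjugates `K` to the diagonal matrix
`D_m ⊗ 1 + i (1 ⊗ D_n)`, whose determinant is the product in the theorem.
-/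

open Real Finset Matrix Kronecker SimpleGraph

theorem Finset.prod_Icc_one_eq_prod_fin {M : Type*} [CommMonoid M] (f : ℕ → M) (m : ℕ) :
    ∏ j ∈ Icc 1 m, f j = ∏ j : Fin m, f (j + 1) := by
  rw [Fin.prod_univ_eq_prod_range (fun j => f (j + 1)), range_eq_Ico, prod_Ico_add' f,
    zero_add, Ico_add_one_right_eq_Icc]

theorem Matrix.diagonal_kronecker_one_add_smul_one_kronecker_diagonal {R ι κ : Type*} [Semiring R]
    [DecidableEq ι] [DecidableEq κ] (c : R) (a : ι → R) (b : κ → R) :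
    diagonal a ⊗ₖ (1 : Matrix κ κ R) + c • ((1 : Matrix ι ι R) ⊗ₖ diagonal b) =
      diagonal fun p => a p.1 + c * b p.2 := by
  rw [← diagonal_one, diagonal_kronecker_diagonal, ← diagonal_one, diagonal_kronecker_diagonal,
    ← diagonal_smul, diagonal_add]
  simp only [mul_one, one_mul, Pi.smul_apply, smul_eq_mul]

theorem Matrix.det_kronecker_one_add_smul_one_kronecker {R ι κ : Type*} [CommRing R]
    [Fintype ι] [DecidableEq ι] [Fintype κ] [DecidableEq κ] (c : R)
    {A S : Matrix ι ι R} {a : ι → R} (hS : IsUnit S.det) (hA : A * S = S * diagonal a)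
    {B T : Matrix κ κ R} {b : κ → R} (hT : IsUnit T.det) (hB : B * T = T * diagonal b) :
    (A ⊗ₖ (1 : Matrix κ κ R) + c • ((1 : Matrix ι ι R) ⊗ₖ B)).det = ∏ i, ∏ j, (a i + c * b j) := by
  have hconj : (A ⊗ₖ (1 : Matrix κ κ R) + c • ((1 : Matrix ι ι R) ⊗ₖ B)) * (S ⊗ₖ T) =
      (S ⊗ₖ T) * diagonal fun p => a p.1 + c * b p.2 := by
    rw [← diagonal_kronecker_one_add_smul_one_kronecker_diagonal, add_mul, mul_add,
      smul_mul_assoc, mul_smul_comm, ← mul_kronecker_mul, ← mul_kronecker_mul,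
      ← mul_kronecker_mul, ← mul_kronecker_mul, hA, hB, one_mul, mul_one, one_mul, mul_one]
  have hST : IsUnit (S ⊗ₖ T).det := by
    rw [det_kronecker]
    exact (hS.pow _).mul (hT.pow _)
  have hdet := congrArg det hconj
  rw [det_mul, det_mul, mul_comm] at hdet
  rw [hST.mul_left_cancel hdet, det_diagonal, Fintype.prod_prod_type]

theorem SimpleGraph.map_adjMatrix {V α β : Type*} [DecidableEq V] (G : SimpleGraph V)
    [DecidableRel G.Adj] [NonAssocSemiring α] [NonAssocSemiring β] (f : α →+* β) :
    (G.adjMatrix α).map f = G.adjMatrix β := by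
  ext v w
  simp only [map_apply, adjMatrix_apply, apply_ite f, map_one, map_zero]

instance (m : ℕ) : DecidableRel (pathGraph m).Adj := fun _ _ => decidable_of_iff' _ pathGraph_adj

-- `f 0` and `f (m + 1)` play the missing neighbours of the two end vertices.
theorem SimpleGraph.pathGraph_adjMatrix_mulVec_apply {R : Type*} [NonAssocSemiring R] {m : ℕ}
    (f : ℕ → R) (hf0 : f 0 = 0) (hfm : f (m + 1) = 0) (x : Fin m) :
    ((pathGraph m).adjMatrix R *ᵥ fun y => f (y + 1)) x = f x + f (x + 2) := by
  have hsplit : ∀ y : Fin m, (pathGraph m).adjMatrix R x y * f (y + 1) =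
      (if (y : ℕ) + 1 = x then f x else 0) + (if (x : ℕ) + 1 = y then f (x + 2) else 0) := by
    intro y
    simp only [adjMatrix_apply, pathGraph_adj]
    split_ifs <;> simp_all <;> first | omega | (congr 1; omega)
  simp only [mulVec, dotProduct, hsplit, sum_add_distrib]
  rw [Fin.sum_univ_eq_sum_range (fun y => if y + 1 = (x : ℕ) then f x else 0),
    Fin.sum_univ_eq_sum_range (fun y => if (x : ℕ) + 1 = y then f (x + 2) else 0),
    sum_ite_eq]
  congr 1
  · rcases x with ⟨_ | k, hk⟩
    · simp [hf0]
    · simp only [Nat.add_right_cancel_iff, sum_ite_eq', mem_range]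
      exact if_pos (by omega)
  · split_ifs with h
    · rfl
    · rw [show (x : ℕ) + 2 = m + 1 by rw [mem_range] at h; omega, hfm]

-- `j : Fin m` stands for the frequency `j + 1 ∈ {1, …, m}` of the theorem.
noncomputable def pathAngle (m : ℕ) (j : Fin m) : ℝ := π * (j + 1) / (m + 1)

noncomputable def sineVec (m : ℕ) (j : Fin m) (x : Fin m) : ℝ := sin (pathAngle m j * (x + 1))

theorem pathAngle_mem_Ioo {m : ℕ} (j : Fin m) : pathAngle m j ∈ Set.Ioo 0 π := by
  have hj : (j : ℝ) + 1 < m + 1 := by exact_mod_cast Nat.succ_lt_succ j.isLt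
  constructor
  · unfold pathAngle; positivity
  · rw [pathAngle, div_lt_iff₀ (by positivity)]
    nlinarith [pi_pos]

theorem pathGraph_adjMatrix_mulVec_sineVec {m : ℕ} (j : Fin m) :
    (pathGraph m).adjMatrix ℝ *ᵥ sineVec m j = (2 * cos (pathAngle m j)) • sineVec m j := by
  set θ := pathAngle m j
  have hvec : sineVec m j = fun y : Fin m => sin (θ * ((y + 1 : ℕ) : ℝ)) := by
    ext y; simp [sineVec, θ]
  have hend : sin (θ * ((m + 1 : ℕ) : ℝ)) = 0 := by
    rw [show θ * ((m + 1 : ℕ) : ℝ) = ((j + 1 : ℕ) : ℝ) * π by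
      simp only [θ, pathAngle]; push_cast; field_simp]
    exact sin_nat_mul_pi _
  ext x
  rw [hvec]
  refine (pathGraph_adjMatrix_mulVec_apply (fun t : ℕ => sin (θ * t)) (by simp) hend x).trans ?_
  rw [Pi.smul_apply, smul_eq_mul]
  push_cast
  rw [show θ * (x + 2) = θ * (x + 1) + θ by ring, show θ * x = θ * (x + 1) - θ by ring,
    sin_add, sin_sub]
  ring

theorem sineVec_ne_zero {m : ℕ} (j : Fin m) : sineVec m j ≠ 0 := by
  intro h
  have h0 := congrFun h ⟨0, j.pos⟩
  simp only [sineVec, CharP.cast_eq_zero, zero_add, mul_one, Pi.zero_apply] at h0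
  exact (sin_pos_of_pos_of_lt_pi (pathAngle_mem_Ioo j).1 (pathAngle_mem_Ioo j).2).ne' h0

theorem two_mul_cos_pathAngle_injective (m : ℕ) :
    Function.Injective fun j : Fin m => 2 * cos (pathAngle m j) := by
  intro j k h
  have hcos := injOn_cos (Set.Ioo_subset_Icc_self (pathAngle_mem_Ioo j))
    (Set.Ioo_subset_Icc_self (pathAngle_mem_Ioo k)) (by simpa using h)
  have hjk : (j : ℝ) = k := by
    simp only [pathAngle] at hcos
    field_simp at hcos
    nlinarith [pi_pos]
  exact Fin.ext (by exact_mod_cast hjk)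

noncomputable def sineMatrix (m : ℕ) : Matrix (Fin m) (Fin m) ℝ :=
  Matrix.of fun x j => sineVec m j x

theorem isUnit_det_sineMatrix (m : ℕ) : IsUnit (sineMatrix m).det := by
  rw [← isUnit_iff_isUnit_det, ← linearIndependent_cols_iff_isUnit]
  refine Module.End.eigenvectors_linearIndependent' (toLin' ((pathGraph m).adjMatrix ℝ)) _
    (two_mul_cos_pathAngle_injective m) _ fun j => ?_
  rw [Module.End.hasEigenvector_iff, Module.End.mem_eigenspace_iff, toLin'_apply]
  exact ⟨pathGraph_adjMatrix_mulVec_sineVec j, sineVec_ne_zero j⟩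

theorem pathGraph_adjMatrix_mul_sineMatrix (m : ℕ) :
    (pathGraph m).adjMatrix ℝ * sineMatrix m =
      sineMatrix m * diagonal fun j => 2 * cos (pathAngle m j) := by
  ext x j
  rw [mul_diagonal]
  simpa [mul_apply, mulVec, dotProduct, sineMatrix, mul_comm] using
    congrFun (pathGraph_adjMatrix_mulVec_sineVec j) x

theorem pathGraph_adjMatrix_diagonalization (m : ℕ) :
    ∃ S : Matrix (Fin m) (Fin m) ℂ, IsUnit S.det ∧
      (pathGraph m).adjMatrix ℂ * S =
        S * diagonal fun j => ((2 * cos (pathAngle m j) : ℝ) : ℂ) := by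
  refine ⟨(sineMatrix m).map Complex.ofRealHom, ?_, ?_⟩
  · rw [← RingHom.mapMatrix_apply, ← RingHom.map_det]
    exact (isUnit_det_sineMatrix m).map Complex.ofRealHom
  · rw [← map_adjMatrix _ Complex.ofRealHom, ← Matrix.map_mul, pathGraph_adjMatrix_mul_sineMatrix,
      Matrix.map_mul, diagonal_map (map_zero _)]
    rfl

theorem kasteleyn_eq_kronecker (m n : ℕ) :
    kasteleyn m n = (pathGraph m).adjMatrix ℂ ⊗ₖ (1 : Matrix (Fin n) (Fin n) ℂ) +
      Complex.I • ((1 : Matrix (Fin m) (Fin m) ℂ) ⊗ₖ (pathGraph n).adjMatrix ℂ) := by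
  ext ⟨x, y⟩ ⟨x', y'⟩
  simp only [kasteleyn, of_apply, Matrix.add_apply, Matrix.smul_apply, kroneckerMap_apply,
    adjMatrix_apply, pathGraph_adj, one_apply, smul_eq_mul]
  by_cases hx : x = x' <;> by_cases hy : y = y' <;> simp_all

theorem kasteleyn_det_general (m n : ℕ) :
    (kasteleyn m n).det =
      ∏ j ∈ Finset.Icc 1 m, ∏ k ∈ Finset.Icc 1 n,
        (((2 * Real.cos (Real.pi * j / (m + 1)) : ℝ) : ℂ) +
          2 * Complex.I * ((Real.cos (Real.pi * k / (n + 1)) : ℝ) : ℂ)) := by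
  obtain ⟨S, hS, hSm⟩ := pathGraph_adjMatrix_diagonalization m
  obtain ⟨T, hT, hTn⟩ := pathGraph_adjMatrix_diagonalization n
  rw [kasteleyn_eq_kronecker, det_kronecker_one_add_smul_one_kronecker _ hS hSm hT hTn,
    prod_Icc_one_eq_prod_fin]
  refine prod_congr rfl fun j _ => ?_
  rw [prod_Icc_one_eq_prod_fin]
  refine prod_congr rfl fun k _ => ?_
  simp only [pathAngle]
  push_cast
  ring

/-- det K = ∏_{j=1}^m ∏_{k=1}^n (2cos(πj/(m+1)) + 2i·cos(πk/(n+1))). -/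
theorem kasteleyn_det (m n : ℕ) (hm : 0 < m) (hn : 0 < n) :
    (kasteleyn m n).det =
      ∏ j ∈ Finset.Icc 1 m, ∏ k ∈ Finset.Icc 1 n,
        (((2 * Real.cos (Real.pi * j / (m + 1)) : ℝ) : ℂ) +
          2 * Complex.I * ((Real.cos (Real.pi * k / (n + 1)) : ℝ) : ℂ)) :=
  kasteleyn_det_general m n
end

section
/- (Existence of the height function) Let m, n be positive integers and let M be a perfect matching of the m×n grid graph on squares (vertices are the unit squares [a,a+1]×[b,b+1] for 0 ≤ a ≤ m−1, 0 ≤ b ≤ n−1, adjacent when the squares share an edge; M corresponds to a domino tiling of the rectangle [0,m]×[0,n]). Color the unit square with lower-left corner (a,b) black if a+b is even and white if a+b is odd, this coloring being defined by parity for all of ℤ². Say a unit lattice edge of the rectangle is crossed by M if the two unit squares of the rectangle adjacent to it are matched to each other in M. Then there exists a function h from the lattice points of [0,m]×[0,n] to ℤ such that for every ordered pair (v,w) of lattice points of [0,m]×[0,n] with w−v a unit coordinate vector: if the edge vw is not crossed by M, then h(w)−h(v) = 1 when the unit square to the left of the directed segment v→w is black, and h(w)−h(v) = −1 when it is white; and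 if the edge vw is crossed by M, then h(w)−h(v) = −3 when the square to the left of v→w is black, and h(w)−h(v) = +3 when it is white. -/
/-- A perfect matching (domino tiling) of the unit squares of the rectangle [0,m]×[0,n]:
squares are indexed by their lower-left corners (a,b) with 0 ≤ a < m, 0 ≤ b < n, and the
matching is a set of unordered pairs of squares sharing an edge, covering each square of the
rectangle exactly once. -/
def IsSquaresMatching (m n : ℕ) (M : Finset (Sym2 (ℤ × ℤ))) : Prop :=
  (∀ e ∈ M, ∀ p : ℤ × ℤ, p ∈ e → 0 ≤ p.1 ∧ p.1 < m ∧ 0 ≤ p.2 ∧ p.2 < n) ∧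
  (∀ e ∈ M, ∃ p q : ℤ × ℤ, e = s(p, q) ∧ (q - p = (1, 0) ∨ q - p = (0, 1))) ∧
  (∀ p : ℤ × ℤ, 0 ≤ p.1 ∧ p.1 < m ∧ 0 ≤ p.2 ∧ p.2 < n → ∃! e, e ∈ M ∧ p ∈ e)

/-- The lower-left corner of the unit square lying to the left of the directed unit
segment v → w. -/
def leftSquare (v w : ℤ × ℤ) : ℤ × ℤ :=
  if w - v = (1, 0) then (v.1, v.2)
  else if w - v = (-1, 0) then (v.1 - 1, v.2 - 1)
  else if w - v = (0, 1) then (v.1 - 1, v.2)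
  else (v.1, v.2 - 1)

/-- The directed unit lattice segment v → w is crossed by the matching M if the two unit
squares adjacent to it (the left square of v → w and the left square of w → v) are matched
to each other in M. -/
def IsCrossed (M : Finset (Sym2 (ℤ × ℤ))) (v w : ℤ × ℤ) : Prop :=
  s(leftSquare v w, leftSquare w v) ∈ M

/-- the prescribed increment of the height function along the edge v → w -/
def delta (M : Finset (Sym2 (ℤ × ℤ))) (v w : ℤ × ℤ) : ℤ :=
  (if s(leftSquare v w, leftSquare w v) ∈ M then -3 else 1) *
  (if Even ((leftSquare v w).1 + (leftSquare v w).2) then 1 else -1)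

lemma lsE (a b : ℤ) : leftSquare (a,b) (a+1,b) = (a,b) := by
  unfold leftSquare; norm_num [Prod.ext_iff]
lemma lsE' (a b : ℤ) : leftSquare (a+1,b) (a,b) = (a,b-1) := by
  unfold leftSquare; norm_num [Prod.ext_iff]
lemma lsN (a b : ℤ) : leftSquare (a,b) (a,b+1) = (a-1,b) := by
  unfold leftSquare; norm_num [Prod.ext_iff]
lemma lsN' (a b : ℤ) : leftSquare (a,b+1) (a,b) = (a,b) := by
  unfold leftSquare; norm_num [Prod.ext_iff]

/-- east edge of face (a,b) -/
lemma dE (M : Finset (Sym2 (ℤ × ℤ))) (a b : ℤ) :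
    delta M (a,b) (a+1,b) =
    (if s(((a,b) : ℤ×ℤ),((a,b-1) : ℤ×ℤ)) ∈ M then -3 else 1) * (if Even (a+b) then 1 else -1) := by
  unfold delta
  rw [lsE, lsE']
/-- north edge of face (a,b) -/
lemma dN (M : Finset (Sym2 (ℤ × ℤ))) (a b : ℤ) :
    delta M (a+1,b) (a+1,b+1) =
    (if s(((a,b) : ℤ×ℤ),((a+1,b) : ℤ×ℤ)) ∈ M then -3 else 1) * (if Even (a+b) then 1 else -1) := by
  unfold delta
  rw [lsN, lsN']
  norm_num
/-- west edge of face (a,b) -/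
lemma dW (M : Finset (Sym2 (ℤ × ℤ))) (a b : ℤ) :
    delta M (a+1,b+1) (a,b+1) =
    (if s(((a,b) : ℤ×ℤ),((a,b+1) : ℤ×ℤ)) ∈ M then -3 else 1) * (if Even (a+b) then 1 else -1) := by
  unfold delta
  rw [lsE, lsE']
  norm_num
/-- south edge of face (a,b) -/
lemma dS (M : Finset (Sym2 (ℤ × ℤ))) (a b : ℤ) :
    delta M (a,b+1) (a,b) =
    (if s(((a,b) : ℤ×ℤ),((a-1,b) : ℤ×ℤ)) ∈ M then -3 else 1) * (if Even (a+b) then 1 else -1) := by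
  unfold delta
  rw [lsN, lsN']

/-- reverse of east edge -/
lemma dE' (M : Finset (Sym2 (ℤ × ℤ))) (a b : ℤ) :
    delta M (a+1,b) (a,b) = - delta M (a,b) (a+1,b) := by
  rw [dE]
  unfold delta
  rw [lsE, lsE', Sym2.eq_swap]
  have h : Even (a + (b-1)) ↔ ¬ Even (a+b) := by
    rw [show a+(b-1) = (a+b)-1 by ring, Int.even_sub_one]
  by_cases hm : s(((a,b):ℤ×ℤ),((a,b-1):ℤ×ℤ)) ∈ M <;>
    by_cases he : Even (a+b) <;>
    simp [hm, he, h] <;> omega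

/-- reverse of north-going vertical edge -/
lemma dN' (M : Finset (Sym2 (ℤ × ℤ))) (a b : ℤ) :
    delta M (a,b+1) (a,b) = - delta M (a,b) (a,b+1) := by
  rw [dS]
  unfold delta
  rw [lsN, lsN', Sym2.eq_swap]
  have h : Even ((a-1) + b) ↔ ¬ Even (a+b) := by
    rw [show (a-1)+b = (a+b)-1 by ring, Int.even_sub_one]
  by_cases hm : s(((a,b):ℤ×ℤ),((a-1,b):ℤ×ℤ)) ∈ M <;>
    by_cases he : Even (a+b) <;>
    simp [hm, he, h] <;> omega

lemma cross_cases (m n : ℕ) (M : Finset (Sym2 (ℤ × ℤ))) (hM : IsSquaresMatching m n M)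
    (a b : ℤ) (h0 : 0 ≤ a) (h1 : a < (m:ℤ)) (h2 : 0 ≤ b) (h3 : b < (n:ℤ)) :
    ∃ X : ℤ × ℤ,
      (X = ((a,b-1):ℤ×ℤ) ∨ X = ((a+1,b):ℤ×ℤ) ∨ X = ((a,b+1):ℤ×ℤ) ∨ X = ((a-1,b):ℤ×ℤ)) ∧
      s(((a,b):ℤ×ℤ), X) ∈ M ∧ ∀ Y : ℤ × ℤ, s(((a,b):ℤ×ℤ), Y) ∈ M → Y = X := by
  obtain ⟨hin, hform, huniq⟩ := hM
  obtain ⟨e, ⟨heM, hpe⟩, hu⟩ := huniq (a,b) ⟨h0, h1, h2, h3⟩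
  have key : ∀ q : ℤ × ℤ, s(((a,b):ℤ×ℤ), q) ∈ M → s(((a,b):ℤ×ℤ), q) = e := by
    intro q hq
    exact hu _ ⟨hq, Sym2.mem_mk_left _ _⟩
  obtain ⟨p, q, rfl, hdir⟩ := hform e heM
  obtain ⟨p1, p2⟩ := p
  obtain ⟨q1, q2⟩ := q
  rw [Sym2.mem_iff] at hpe
  simp only [Prod.mk_sub_mk, Prod.mk.injEq] at hdir hpe
  rcases hpe with ⟨ha, hb⟩ | ⟨ha, hb⟩ <;> rcases hdir with ⟨hc, hd⟩ | ⟨hc, hd⟩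
  · -- (a,b) = (p1,p2), q = (a+1, b)
    refine ⟨(q1, q2), by right; left; simp [Prod.ext_iff]; omega, ?_, ?_⟩
    · have : s(((a,b):ℤ×ℤ), ((q1,q2):ℤ×ℤ)) = s(((p1,p2):ℤ×ℤ), ((q1,q2):ℤ×ℤ)) := by
        rw [show ((a,b):ℤ×ℤ) = ((p1,p2):ℤ×ℤ) by simp [Prod.ext_iff]; omega]
      rw [this]; exact heM
    · intro Y hY
      have h := key Y hY
      have h2 : s(((a,b):ℤ×ℤ), Y) = s(((a,b):ℤ×ℤ), ((q1,q2):ℤ×ℤ)) := by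
        rw [h]; congr 1 <;> simp [Prod.ext_iff] <;> omega
      exact Sym2.congr_right.mp h2
  · -- (a,b) = (p1,p2), q = (a, b+1)
    refine ⟨(q1, q2), by right; right; left; simp [Prod.ext_iff]; omega, ?_, ?_⟩
    · have : s(((a,b):ℤ×ℤ), ((q1,q2):ℤ×ℤ)) = s(((p1,p2):ℤ×ℤ), ((q1,q2):ℤ×ℤ)) := by
        rw [show ((a,b):ℤ×ℤ) = ((p1,p2):ℤ×ℤ) by simp [Prod.ext_iff]; omega]
      rw [this]; exact heM
    · intro Y hY
      have h := key Y hY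
      have h2 : s(((a,b):ℤ×ℤ), Y) = s(((a,b):ℤ×ℤ), ((q1,q2):ℤ×ℤ)) := by
        rw [h]; congr 1 <;> simp [Prod.ext_iff] <;> omega
      exact Sym2.congr_right.mp h2
  · -- (a,b) = (q1,q2), p = (a-1, b)
    refine ⟨(p1, p2), by right; right; right; simp [Prod.ext_iff]; omega, ?_, ?_⟩
    · have : s(((a,b):ℤ×ℤ), ((p1,p2):ℤ×ℤ)) = s(((p1,p2):ℤ×ℤ), ((q1,q2):ℤ×ℤ)) := by
        rw [Sym2.eq_swap]; congr 1; simp [Prod.ext_iff]; omega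
      rw [this]; exact heM
    · intro Y hY
      have h := key Y hY
      have h2 : s(((a,b):ℤ×ℤ), Y) = s(((a,b):ℤ×ℤ), ((p1,p2):ℤ×ℤ)) := by
        rw [h, Sym2.eq_swap]; congr 1 <;> simp [Prod.ext_iff] <;> omega
      exact Sym2.congr_right.mp h2
  · -- (a,b) = (q1,q2), p = (a, b-1)
    refine ⟨(p1, p2), by left; simp [Prod.ext_iff]; omega, ?_, ?_⟩
    · have : s(((a,b):ℤ×ℤ), ((p1,p2):ℤ×ℤ)) = s(((p1,p2):ℤ×ℤ), ((q1,q2):ℤ×ℤ)) := by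
        rw [Sym2.eq_swap]; congr 1; simp [Prod.ext_iff]; omega
      rw [this]; exact heM
    · intro Y hY
      have h := key Y hY
      have h2 : s(((a,b):ℤ×ℤ), Y) = s(((a,b):ℤ×ℤ), ((p1,p2):ℤ×ℤ)) := by
        rw [h, Sym2.eq_swap]; congr 1 <;> simp [Prod.ext_iff] <;> omega
      exact Sym2.congr_right.mp h2

lemma face_sum (m n : ℕ) (M : Finset (Sym2 (ℤ × ℤ))) (hM : IsSquaresMatching m n M)
    (a b : ℤ) (h0 : 0 ≤ a) (h1 : a < (m:ℤ)) (h2 : 0 ≤ b) (h3 : b < (n:ℤ)) :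
    delta M (a,b) (a+1,b) + delta M (a+1,b) (a+1,b+1) +
      delta M (a+1,b+1) (a,b+1) + delta M (a,b+1) (a,b) = 0 := by
  rw [dE, dN, dW, dS]
  obtain ⟨X, hX, hmem, huniq⟩ := cross_cases m n M hM a b h0 h1 h2 h3
  have sep : ∀ Y : ℤ × ℤ, Y ≠ X → s(((a,b):ℤ×ℤ), Y) ∉ M := fun Y hne hY => hne (huniq Y hY)
  rcases hX with rfl | rfl | rfl | rfl
  · rw [if_pos hmem,
      if_neg (sep _ (by simp [Prod.ext_iff]; try omega)),
      if_neg (sep _ (by simp [Prod.ext_iff]; try omega)),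
      if_neg (sep _ (by simp [Prod.ext_iff]; try omega))]
    by_cases he : Even (a+b) <;> simp [he] <;> ring
  · rw [if_pos hmem,
      if_neg (sep _ (by simp [Prod.ext_iff]; try omega)),
      if_neg (sep _ (by simp [Prod.ext_iff]; try omega)),
      if_neg (sep _ (by simp [Prod.ext_iff]; try omega))]
    by_cases he : Even (a+b) <;> simp [he] <;> ring
  · rw [if_pos hmem,
      if_neg (sep _ (by simp [Prod.ext_iff]; try omega)),
      if_neg (sep _ (by simp [Prod.ext_iff]; try omega)),
      if_neg (sep _ (by simp [Prod.ext_iff]; try omega))]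
    by_cases he : Even (a+b) <;> simp [he] <;> ring
  · rw [if_pos hmem,
      if_neg (sep _ (by simp [Prod.ext_iff]; try omega)),
      if_neg (sep _ (by simp [Prod.ext_iff]; try omega)),
      if_neg (sep _ (by simp [Prod.ext_iff]; try omega))]
    by_cases he : Even (a+b) <;> simp [he] <;> ring

def hgt (M : Finset (Sym2 (ℤ × ℤ))) : ℤ × ℤ → ℤ :=
  fun p => (∑ i ∈ Finset.range p.1.toNat, delta M ((i:ℤ), 0) ((i:ℤ)+1, 0)) +
           (∑ j ∈ Finset.range p.2.toNat, delta M (p.1, (j:ℤ)) (p.1, (j:ℤ)+1))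

lemma hgt_vert (M : Finset (Sym2 (ℤ × ℤ))) (a b : ℤ) (hb : 0 ≤ b) :
    hgt M (a, b+1) - hgt M (a, b) = delta M (a,b) (a,b+1) := by
  have h1 : (b+1).toNat = b.toNat + 1 := by omega
  have h2 : ((b.toNat : ℤ)) = b := Int.toNat_of_nonneg hb
  simp only [hgt, h1, Finset.sum_range_succ, h2]
  ring

lemma hgt_horiz (m n : ℕ) (M : Finset (Sym2 (ℤ × ℤ))) (hM : IsSquaresMatching m n M)
    (a : ℤ) (ha : 0 ≤ a) (ha' : a + 1 ≤ (m:ℤ)) :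
    ∀ k : ℕ, (k:ℤ) ≤ (n:ℤ) →
      hgt M (a+1, (k:ℤ)) - hgt M (a, (k:ℤ)) = delta M (a,(k:ℤ)) (a+1,(k:ℤ)) := by
  intro k
  induction k with
  | zero =>
    intro _
    have h1 : (a+1).toNat = a.toNat + 1 := by omega
    have h2 : ((a.toNat : ℤ)) = a := Int.toNat_of_nonneg ha
    simp only [hgt, h1, Finset.sum_range_succ, h2, Int.toNat_zero, Finset.range_zero,
      Finset.sum_empty, Nat.cast_zero]
    ring
  | succ k ih =>
    intro hk
    have hk' : (k:ℤ) ≤ (n:ℤ) := by push_cast at hk ⊢; omega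
    have hkn : (k:ℤ) < (n:ℤ) := by push_cast at hk; omega
    have e1 : hgt M (a+1, (k:ℤ)+1) - hgt M (a+1, (k:ℤ)) = delta M (a+1,(k:ℤ)) (a+1,(k:ℤ)+1) :=
      hgt_vert M (a+1) k (by positivity)
    have e2 : hgt M (a, (k:ℤ)+1) - hgt M (a, (k:ℤ)) = delta M (a,(k:ℤ)) (a,(k:ℤ)+1) :=
      hgt_vert M a k (by positivity)
    have e3 := ih hk'
    have e4 := face_sum m n M hM a k ha (by omega) (by positivity) hkn
    have e5 := dE' M a ((k:ℤ)+1)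
    have e6 := dN' M a (k:ℤ)
    have hc : ((k:ℤ)+1) = ((k+1 : ℕ) : ℤ) := by push_cast; ring
    rw [← hc]
    -- from e4: delta (a,k+1)(a+1,k+1) = delta(a,k)(a+1,k) + delta(a+1,k)(a+1,k+1) - delta(a,k)(a,k+1)
    have key : delta M (a,(k:ℤ)+1) (a+1,(k:ℤ)+1) =
        delta M (a,(k:ℤ)) (a+1,(k:ℤ)) + delta M (a+1,(k:ℤ)) (a+1,(k:ℤ)+1)
          - delta M (a,(k:ℤ)) (a,(k:ℤ)+1) := by
      have := e4
      rw [show delta M (a+1,(k:ℤ)+1) (a,(k:ℤ)+1) = - delta M (a,(k:ℤ)+1) (a+1,(k:ℤ)+1) from e5,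
        show delta M (a,(k:ℤ)+1) (a,(k:ℤ)) = - delta M (a,(k:ℤ)) (a,(k:ℤ)+1) from e6] at this
      linarith
    rw [key]
    linarith [e1, e2, e3]

/-- Existence of the height function: for any domino tiling M of the rectangle [0,m]×[0,n]
(squares colored black when the coordinate sum of the lower-left corner is even, white when
odd), there is h : ℤ×ℤ → ℤ such that for every ordered pair (v,w) of lattice points of the
rectangle with w - v a unit coordinate vector: if the edge vw is not crossed by M then
h(w)-h(v) = 1 when the square to the left of v → w is black and h(w)-h(v) = -1 when it is
white; if the edge vw is crossed by M then h(w)-h(v) = -3 when the left square is black and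
h(w)-h(v) = 3 when it is white. -/
theorem exists_height_function (m n : ℕ) (hm : 0 < m) (hn : 0 < n)
    (M : Finset (Sym2 (ℤ × ℤ))) (hM : IsSquaresMatching m n M) :
    ∃ h : ℤ × ℤ → ℤ, ∀ v w : ℤ × ℤ,
      (0 ≤ v.1 ∧ v.1 ≤ m ∧ 0 ≤ v.2 ∧ v.2 ≤ n) →
      (0 ≤ w.1 ∧ w.1 ≤ m ∧ 0 ≤ w.2 ∧ w.2 ≤ n) →
      (w - v = (1, 0) ∨ w - v = (-1, 0) ∨ w - v = (0, 1) ∨ w - v = (0, -1)) →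
      ((¬ IsCrossed M v w →
          (Even ((leftSquare v w).1 + (leftSquare v w).2) → h w - h v = 1) ∧
          (¬ Even ((leftSquare v w).1 + (leftSquare v w).2) → h w - h v = -1)) ∧
        (IsCrossed M v w →
          (Even ((leftSquare v w).1 + (leftSquare v w).2) → h w - h v = -3) ∧
          (¬ Even ((leftSquare v w).1 + (leftSquare v w).2) → h w - h v = 3))) := by
  refine ⟨hgt M, ?_⟩
  intro v w hv hw hdir
  obtain ⟨v1, v2⟩ := v
  obtain ⟨w1, w2⟩ := w
  obtain ⟨hv0, hv1, hv2, hv3⟩ := hv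
  obtain ⟨hw0, hw1, hw2, hw3⟩ := hw
  simp only [Prod.mk_sub_mk, Prod.mk.injEq] at hdir
  suffices key : hgt M (w1,w2) - hgt M (v1,v2) = delta M (v1,v2) (w1,w2) by
    rw [key]
    unfold delta IsCrossed
    constructor
    · intro hc
      rw [if_neg hc]
      constructor <;> intro he <;> simp [he]
    · intro hc
      rw [if_pos hc]
      constructor <;> intro he <;> simp [he]
  dsimp only at hv0 hv1 hv2 hv3 hw0 hw1 hw2 hw3
  have hvk : ((v2.toNat : ℤ)) = v2 := Int.toNat_of_nonneg hv2
  have hwk : ((w2.toNat : ℤ)) = w2 := Int.toNat_of_nonneg hw2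
  rcases hdir with ⟨h1, h2⟩ | ⟨h1, h2⟩ | ⟨h1, h2⟩ | ⟨h1, h2⟩
  · -- east
    rw [show w1 = v1 + 1 from by omega, show w2 = v2 from by omega]
    have := hgt_horiz m n M hM v1 hv0 (by omega) v2.toNat (by rw [hvk]; exact hv3)
    rw [hvk] at this
    exact this
  · -- west
    rw [show v1 = w1 + 1 from by omega, show v2 = w2 from by omega]
    have e := hgt_horiz m n M hM w1 hw0 (by omega) w2.toNat (by rw [hwk]; exact hw3)
    rw [hwk] at e
    have e' := dE' M w1 w2
    linarith
  · -- north
    rw [show w1 = v1 from by omega, show w2 = v2 + 1 from by omega]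
    exact hgt_vert M v1 v2 hv2
  · -- south
    rw [show v1 = w1 from by omega, show v2 = w2 + 1 from by omega]
    have e := hgt_vert M w1 w2 hw2
    have e' := dN' M w1 w2
    linarith
end

section
/- (Isoradiality is preserved by Y–Δ) Let 0 < q < 4, set r = arccos(√q/2), and define f(θ) = √q·sin((2r/π)·θ) / sin((2r/π)·(π/2 − θ)) for θ ∈ (0, π/2). Then for all θ_a, θ_b, θ_c ∈ (0, π/2) with θ_a + θ_b + θ_c = π/2, setting a = f(θ_a), b = f(θ_b), c = f(θ_c), one has ab + ac + bc + abc = q, i.e. the Y–Δ solvability relation −q + ab + ac + bc + abc = 0 holds. -/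
set_option maxHeartbeats 1000000


/-- The isoradial FK-percolation edge weight: f(θ) = √q·sin((2r/π)θ)/sin((2r/π)(π/2-θ))
with r = arccos(√q/2). -/
noncomputable def isoradialWeight (q θ : ℝ) : ℝ :=
  Real.sqrt q * Real.sin ((2 * Real.arccos (Real.sqrt q / 2) / Real.pi) * θ) /
    Real.sin ((2 * Real.arccos (Real.sqrt q / 2) / Real.pi) * (Real.pi / 2 - θ))

lemma key_trig (α β γ : ℝ) :
    Real.sin α * Real.sin β * Real.sin (α+β) + Real.sin α * Real.sin γ * Real.sin (α+γ) +
      Real.sin β * Real.sin γ * Real.sin (β+γ) +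
      2 * Real.cos (α+β+γ) * (Real.sin α * Real.sin β * Real.sin γ) =
    Real.sin (α+β) * Real.sin (β+γ) * Real.sin (α+γ) := by
  simp only [Real.sin_add, Real.cos_add]
  linear_combination
    (-(Real.sin β ^ 2 * Real.sin γ * Real.cos γ) - Real.sin β * Real.cos β * Real.sin γ ^ 2) *
      (Real.sin_sq_add_cos_sq α) +
    (-(Real.sin α ^ 2 * Real.sin γ * Real.cos γ) - Real.sin α * Real.cos α * Real.sin γ ^ 2) *
      (Real.sin_sq_add_cos_sq β) +
    (-(Real.sin α ^ 2 * Real.sin β * Real.cos β) - Real.sin α * Real.cos α * Real.sin β ^ 2) *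
      (Real.sin_sq_add_cos_sq γ)

/-- Isoradiality is preserved by Y–Δ: for 0 < q < 4 and rhombus half-angles
θ_a, θ_b, θ_c ∈ (0, π/2) with θ_a + θ_b + θ_c = π/2, the weights a = f(θ_a), b = f(θ_b),
c = f(θ_c) satisfy the Y–Δ solvability relation ab + ac + bc + abc = q. -/
theorem isoradialWeight_ydelta_relation (q : ℝ) (hq0 : 0 < q) (hq4 : q < 4)
    (θa θb θc : ℝ)
    (ha : θa ∈ Set.Ioo 0 (Real.pi / 2)) (hb : θb ∈ Set.Ioo 0 (Real.pi / 2))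
    (hc : θc ∈ Set.Ioo 0 (Real.pi / 2)) (hsum : θa + θb + θc = Real.pi / 2) :
    isoradialWeight q θa * isoradialWeight q θb +
      isoradialWeight q θa * isoradialWeight q θc +
      isoradialWeight q θb * isoradialWeight q θc +
      isoradialWeight q θa * isoradialWeight q θb * isoradialWeight q θc = q := by
  obtain ⟨ha0, ha1⟩ := ha
  obtain ⟨hb0, hb1⟩ := hb
  obtain ⟨hc0, hc1⟩ := hc
  set s := Real.sqrt q with hs
  have hs0 : 0 < s := Real.sqrt_pos.2 hq0
  have hs2 : s < 2 := by
    nlinarith [Real.sq_sqrt hq0.le, Real.sqrt_nonneg q]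
  have hsq : s ^ 2 = q := Real.sq_sqrt hq0.le
  set r := Real.arccos (s / 2) with hrdef
  have hr0 : 0 < r := Real.arccos_pos.2 (by linarith)
  have hrpi : r < Real.pi / 2 := (Real.arccos_lt_pi_div_two).2 (by linarith)
  have hcos : Real.cos r = s / 2 := Real.cos_arccos (by linarith) (by linarith)
  have hpi : Real.pi ≠ 0 := Real.pi_ne_zero
  set k := 2 * r / Real.pi with hk
  have hk0 : 0 < k := by
    have := Real.pi_pos
    positivity
  set α := k * θa with hα
  set β := k * θb with hβ
  set γ := k * θc with hγ
  have hsumr : α + β + γ = r := by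
    have : k * (θa + θb + θc) = r := by
      rw [hsum, hk]; field_simp
    linarith [this, (by ring : k * (θa + θb + θc) = k * θa + k * θb + k * θc)]
  have harga : k * (Real.pi / 2 - θa) = β + γ := by
    have : k * (Real.pi / 2) = r := by rw [hk]; field_simp
    nlinarith [this]
  have hargb : k * (Real.pi / 2 - θb) = α + γ := by
    have : k * (Real.pi / 2) = r := by rw [hk]; field_simp
    nlinarith [this]
  have hargc : k * (Real.pi / 2 - θc) = α + β := by
    have : k * (Real.pi / 2) = r := by rw [hk]; field_simp
    nlinarith [this]
  have hα0 : 0 < α := mul_pos hk0 ha0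
  have hβ0 : 0 < β := mul_pos hk0 hb0
  have hγ0 : 0 < γ := mul_pos hk0 hc0
  have hSbc : 0 < Real.sin (β + γ) := Real.sin_pos_of_pos_of_lt_pi (by linarith) (by
    have : β + γ < r := by linarith
    linarith [Real.pi_pos])
  have hSac : 0 < Real.sin (α + γ) := Real.sin_pos_of_pos_of_lt_pi (by linarith) (by
    have : α + γ < r := by linarith
    linarith [Real.pi_pos])
  have hSab : 0 < Real.sin (α + β) := Real.sin_pos_of_pos_of_lt_pi (by linarith) (by
    have : α + β < r := by linarith
    linarith [Real.pi_pos])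
  have hwa : isoradialWeight q θa = s * Real.sin α / Real.sin (β + γ) := by
    rw [isoradialWeight, ← hs, ← hrdef, ← hk, ← hα, harga]
  have hwb : isoradialWeight q θb = s * Real.sin β / Real.sin (α + γ) := by
    rw [isoradialWeight, ← hs, ← hrdef, ← hk, ← hβ, hargb]
  have hwc : isoradialWeight q θc = s * Real.sin γ / Real.sin (α + β) := by
    rw [isoradialWeight, ← hs, ← hrdef, ← hk, ← hγ, hargc]
  rw [hwa, hwb, hwc]
  have key := key_trig α β γ
  rw [hsumr] at key
  have hP : Real.sin (β+γ) * Real.sin (α+γ) * Real.sin (α+β) ≠ 0 := by positivity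
  have hmain : s * Real.sin α / Real.sin (β + γ) * (s * Real.sin β / Real.sin (α + γ)) +
      s * Real.sin α / Real.sin (β + γ) * (s * Real.sin γ / Real.sin (α + β)) +
      s * Real.sin β / Real.sin (α + γ) * (s * Real.sin γ / Real.sin (α + β)) +
      s * Real.sin α / Real.sin (β + γ) * (s * Real.sin β / Real.sin (α + γ)) *
        (s * Real.sin γ / Real.sin (α + β)) =
      (s^2 * (Real.sin α * Real.sin β * Real.sin (α+β) +
        Real.sin α * Real.sin γ * Real.sin (α+γ) + Real.sin β * Real.sin γ * Real.sin (β+γ)) +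
        s^3 * (Real.sin α * Real.sin β * Real.sin γ)) /
        (Real.sin (β+γ) * Real.sin (α+γ) * Real.sin (α+β)) := by
    field_simp
  rw [hmain, div_eq_iff hP]
  linear_combination q * key +
    (Real.sin α * Real.sin β * Real.sin (α+β) +
     Real.sin α * Real.sin γ * Real.sin (α+γ) +
     Real.sin β * Real.sin γ * Real.sin (β+γ) +
     s * (Real.sin α * Real.sin β * Real.sin γ)) * hsq +
    (-2 * q * (Real.sin α * Real.sin β * Real.sin γ)) * hcos
end

section
/- (Uniqueness of the isoradial weight function) Let 0 < q < 4 and r = arccos(√q/2). Suppose f : (0, π/2) → (0, ∞) is continuous and satisfies: (i) f(θ)·f(π/2 − θ) = q for all θ ∈ (0, π/2), and (ii) f(θ_a)f(θ_b) + f(θ_a)f(θ_c) + f(θ_b)f(θ_c) + f(θ_a)f(θ_b)f(θ_c) = q for all θ_a, θ_b, θ_c ∈ (0, π/2) with θ_a + θ_b + θ_c = π/2. Then f(θ) = √q·sin((2r/π)·θ) / sin((2r/π)·(π/2 − θ)) for all θ ∈ (0, π/2). -/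
/-!
Choosing `θc = π/2 - (θa + θb)` and using (i) to replace `f θc` by `q / f (θa + θb)` turns (ii)
into an addition law expressing `f (θa + θb)` through `f θa` and `f θb`. For positive solutions
this law also determines `f (θ / 2)` from `f θ`, as the unique positive root of a quadratic, so
two positive solutions that agree at `π/4` agree at every dyadic multiple of `π/2` in the
interval, hence everywhere by continuity. By (i), `f (π/4) = √q`. The claimed weight is
`x ↦ 2 cos r · sin x / sin (r - x)` at `x = 2rθ/π`, where `2 cos r = √q`; it satisfies the addition
law by two sine identities, and equals `2 cos r` at `x = r/2`, i.e. at `θ = π/4`.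
-/

open Real Set Filter Topology

/-- The Y–Δ relation with `θc = L - (θa + θb)` eliminated through the duality
`f θc = q / f (θa + θb)`. -/
def HasAdditionLaw (q L : ℝ) (F : ℝ → ℝ) : Prop :=
  ∀ a ∈ Ioo 0 L, ∀ b ∈ Ioo 0 L, a + b < L →
    F (a + b) * (q - F a * F b) = q * (F a + F b + F a * F b)

theorem div_two_pow_succ_mem_Ioo {L : ℝ} (hL : 0 < L) (k : ℕ) : L / 2 ^ (k + 1) ∈ Ioo 0 L :=
  ⟨by positivity, div_lt_self hL (one_lt_pow₀ one_lt_two k.succ_ne_zero)⟩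

namespace HasAdditionLaw

variable {q L : ℝ} {F G : ℝ → ℝ}

theorem comp_mul {c L' : ℝ} (hF : HasAdditionLaw q L F) (hc : 0 < c) (hL : c * L' = L) :
    HasAdditionLaw q L' (fun x => F (c * x)) := by
  have hmaps : ∀ x ∈ Ioo 0 L', c * x ∈ Ioo 0 L := fun x hx =>
    ⟨mul_pos hc hx.1, hL ▸ mul_lt_mul_of_pos_left hx.2 hc⟩
  intro a ha b hb hab
  simpa only [mul_add] using
    hF _ (hmaps a ha) _ (hmaps b hb) (by rw [← mul_add, ← hL]; exact mul_lt_mul_of_pos_left hab hc)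

theorem apply_add_eq (hq : 0 < q) (hF : HasAdditionLaw q L F) (hG : HasAdditionLaw q L G)
    {a b : ℝ} (ha : a ∈ Ioo 0 L) (hb : b ∈ Ioo 0 L) (hab : a + b < L)
    (hFa : 0 < F a) (hFb : 0 < F b) (hea : F a = G a) (heb : F b = G b) :
    F (a + b) = G (a + b) := by
  have hFab := hF a ha b hb hab
  have hGab := hG a ha b hb hab
  rw [← hea, ← heb] at hGab
  have hne : F (a + b) * (q - F a * F b) ≠ 0 := by rw [hFab]; positivity
  exact mul_right_cancel₀ (right_ne_zero_of_mul hne) (hFab.trans hGab.symm)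

theorem apply_half_eq (hq : 0 < q) (hF : HasAdditionLaw q L F) (hG : HasAdditionLaw q L G)
    (hFpos : ∀ x ∈ Ioo 0 L, 0 < F x) (hGpos : ∀ x ∈ Ioo 0 L, 0 < G x)
    {θ : ℝ} (hθ : θ ∈ Ioo 0 L) (he : F θ = G θ) : F (θ / 2) = G (θ / 2) := by
  have hθ2 : θ / 2 ∈ Ioo 0 L := ⟨by linarith [hθ.1], by linarith [hθ.1, hθ.2]⟩
  have hFθ := hF _ hθ2 _ hθ2 (by linarith [hθ.2])
  have hGθ := hG _ hθ2 _ hθ2 (by linarith [hθ.2])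
  rw [add_halves, he] at hFθ
  rw [add_halves] at hGθ
  -- both values are positive roots of `(G θ + q) x ^ 2 + 2 q x - q G θ`
  have key : (F (θ / 2) - G (θ / 2)) * ((F (θ / 2) + G (θ / 2)) * (G θ + q) + 2 * q) = 0 := by
    linear_combination hGθ - hFθ
  have := hFpos _ hθ2
  have := hGpos _ hθ2
  have := hGpos _ hθ
  exact sub_eq_zero.1 ((mul_eq_zero.1 key).resolve_right (by positivity))

theorem apply_div_two_pow_eq (hq : 0 < q) (hF : HasAdditionLaw q L F)
    (hG : HasAdditionLaw q L G) (hFpos : ∀ x ∈ Ioo 0 L, 0 < F x)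
    (hGpos : ∀ x ∈ Ioo 0 L, 0 < G x) (hmid : F (L / 2) = G (L / 2)) (hL : 0 < L) (k : ℕ) :
    F (L / 2 ^ (k + 1)) = G (L / 2 ^ (k + 1)) := by
  induction k with
  | zero => simpa using hmid
  | succ k ih =>
    rw [pow_succ, ← div_div]
    exact hF.apply_half_eq hq hG hFpos hGpos (div_two_pow_succ_mem_Ioo hL k) ih

theorem apply_eq_of_dyadic (hq : 0 < q) (hF : HasAdditionLaw q L F)
    (hG : HasAdditionLaw q L G) (hFpos : ∀ x ∈ Ioo 0 L, 0 < F x)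
    (hGpos : ∀ x ∈ Ioo 0 L, 0 < G x) (hmid : F (L / 2) = G (L / 2)) {n m : ℕ}
    (hx : (m : ℝ) * (L / 2 ^ n) ∈ Ioo 0 L) : F (m * (L / 2 ^ n)) = G (m * (L / 2 ^ n)) := by
  have hL : 0 < L := hx.1.trans hx.2
  have hunit := hF.apply_div_two_pow_eq hq hG hFpos hGpos hmid hL
  have hmul : ∀ k j : ℕ, ((j : ℝ) + 1) * (L / 2 ^ (k + 1)) < L →
      F ((j + 1) * (L / 2 ^ (k + 1))) = G ((j + 1) * (L / 2 ^ (k + 1))) := by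
    intro k j
    induction j with
    | zero => simpa using fun _ => hunit k
    | succ j ih =>
      intro hlt
      set u := L / 2 ^ (k + 1)
      have hu := div_two_pow_succ_mem_Ioo hL k
      have hju : ((j : ℝ) + 1) * u < L := by push_cast at hlt; nlinarith [hu.1]
      have hju_mem : ((j : ℝ) + 1) * u ∈ Ioo 0 L := ⟨by positivity, hju⟩
      have hsum : ((j : ℝ) + 1) * u + u < L := by push_cast at hlt; linarith
      have := hF.apply_add_eq hq hG hju_mem hu hsum (hFpos _ hju_mem) (hFpos _ hu) (ih hju) (hunit k)
      push_cast
      rwa [add_one_mul]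
  obtain _ | j := m
  · simp at hx
  obtain _ | k := n
  · simp only [pow_zero, div_one, mem_Ioo, Nat.cast_succ] at hx
    exfalso
    nlinarith [hx.2, (j.cast_nonneg : (0 : ℝ) ≤ j)]
  exact_mod_cast hmul k j (by exact_mod_cast hx.2)

end HasAdditionLaw

theorem eqOn_Ioo_of_eq_dyadic {L : ℝ} {F G : ℝ → ℝ} (hF : ContinuousOn F (Ioo 0 L))
    (hG : ContinuousOn G (Ioo 0 L))
    (h : ∀ n m : ℕ, (m : ℝ) * (L / 2 ^ n) ∈ Ioo 0 L → F (m * (L / 2 ^ n)) = G (m * (L / 2 ^ n))) :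
    EqOn F G (Ioo 0 L) := by
  intro θ hθ
  have hL : 0 < L := hθ.1.trans hθ.2
  have hx : Tendsto (fun n : ℕ => (⌊θ / L * 2 ^ n⌋₊ : ℝ) * (L / 2 ^ n)) atTop (𝓝 θ) := by
    have h := ((tendsto_nat_floor_mul_div_atTop (div_nonneg hθ.1.le hL.le)).comp
      (tendsto_pow_atTop_atTop_of_one_lt one_lt_two)).mul_const L
    rw [div_mul_cancel₀ _ hL.ne'] at h
    refine h.congr fun n => ?_
    simp only [Function.comp_apply]
    ring
  have hθnhds : Ioo 0 L ∈ 𝓝 θ := isOpen_Ioo.mem_nhds hθ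
  have hFx := (hF.continuousAt hθnhds).tendsto.comp hx
  have hGx := (hG.continuousAt hθnhds).tendsto.comp hx
  exact tendsto_nhds_unique (hFx.congr' ((hx.eventually hθnhds).mono fun n hn => h _ _ hn)) hGx

theorem HasAdditionLaw.eqOn {q L : ℝ} {F G : ℝ → ℝ} (hq : 0 < q) (hF : HasAdditionLaw q L F)
    (hG : HasAdditionLaw q L G) (hFpos : ∀ x ∈ Ioo 0 L, 0 < F x)
    (hGpos : ∀ x ∈ Ioo 0 L, 0 < G x) (hFc : ContinuousOn F (Ioo 0 L))
    (hGc : ContinuousOn G (Ioo 0 L)) (hmid : F (L / 2) = G (L / 2)) : EqOn F G (Ioo 0 L) :=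
  eqOn_Ioo_of_eq_dyadic hFc hGc fun _ _ hx => hF.apply_eq_of_dyadic hq hG hFpos hGpos hmid hx

theorem hasAdditionLaw_of_dual {q L : ℝ} {f : ℝ → ℝ}
    (hdual : ∀ θ ∈ Ioo 0 L, f θ * f (L - θ) = q)
    (hydelta : ∀ θa ∈ Ioo 0 L, ∀ θb ∈ Ioo 0 L, ∀ θc ∈ Ioo 0 L, θa + θb + θc = L →
      f θa * f θb + f θa * f θc + f θb * f θc + f θa * f θb * f θc = q) :
    HasAdditionLaw q L f := by
  intro a ha b hb hab
  have hc : L - (a + b) ∈ Ioo 0 L := ⟨by linarith, by linarith [ha.1, hb.1]⟩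
  have hY := hydelta a ha b hb _ hc (by ring)
  have hD := hdual _ hc
  rw [sub_sub_cancel] at hD
  linear_combination (f a + f b + f a * f b) * hD - f (a + b) * hY

theorem sin_sub_mul_sin_sub_sub_sin_mul_sin (r α β : ℝ) :
    sin (r - α) * sin (r - β) - sin α * sin β = sin r * sin (r - (α + β)) := by
  rw [sin_sub, sin_sub, sin_sub, cos_add, sin_add]
  linear_combination (sin α * sin β) * sin_sq_add_cos_sq r

theorem sin_mul_sin_sub_add_sin_mul_sin_sub (r α β : ℝ) :
    sin α * sin (r - β) + sin β * sin (r - α) + 2 * cos r * (sin α * sin β) =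
      sin r * sin (α + β) := by
  rw [sin_sub, sin_sub, sin_add]
  ring

noncomputable def sinRatioWeight (r x : ℝ) : ℝ := 2 * cos r * sin x / sin (r - x)

section sinRatioWeight

variable {r : ℝ}

theorem sin_sub_pos_of_mem_Ioo {x : ℝ} (hr : r ≤ π) (hx : x ∈ Ioo 0 r) : 0 < sin (r - x) :=
  sin_pos_of_pos_of_lt_pi (by linarith [hx.2]) (by linarith [hx.1])

theorem sinRatioWeight_pos {x : ℝ} (hr : r < π / 2) (hx : x ∈ Ioo 0 r) :
    0 < sinRatioWeight r x := by
  have := cos_pos_of_mem_Ioo ⟨by linarith [hx.1, hx.2, pi_pos], hr⟩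
  have := sin_pos_of_pos_of_lt_pi hx.1 (by linarith [hx.2, pi_pos])
  have := sin_sub_pos_of_mem_Ioo (by linarith [pi_pos]) hx
  unfold sinRatioWeight
  positivity

theorem continuousOn_sinRatioWeight (hr : r ≤ π) : ContinuousOn (sinRatioWeight r) (Ioo 0 r) :=
  (continuous_const.mul continuous_sin).continuousOn.div
    (continuous_sin.comp (continuous_const.sub continuous_id)).continuousOn
    fun _ hx => (sin_sub_pos_of_mem_Ioo hr hx).ne'

theorem sinRatioWeight_half (hr0 : 0 < r) (hr : r ≤ π) : sinRatioWeight r (r / 2) = 2 * cos r := by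
  have : sin (r / 2) ≠ 0 := (sin_pos_of_pos_of_lt_pi (by linarith) (by linarith)).ne'
  rw [sinRatioWeight, sub_half, mul_div_assoc, div_self this, mul_one]

theorem hasAdditionLaw_sinRatioWeight (hr : r ≤ π) :
    HasAdditionLaw ((2 * cos r) ^ 2) r (sinRatioWeight r) := by
  intro a ha b hb hab
  have := (sin_sub_pos_of_mem_Ioo hr ha).ne'
  have := (sin_sub_pos_of_mem_Ioo hr hb).ne'
  have := (sin_sub_pos_of_mem_Ioo hr ⟨add_pos ha.1 hb.1, hab⟩).ne'
  simp only [sinRatioWeight]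
  field_simp
  linear_combination cos r ^ 3 * sin (a + b) * sin_sub_mul_sin_sub_sub_sin_mul_sin r a b -
    cos r ^ 3 * sin (r - (a + b)) * sin_mul_sin_sub_add_sin_mul_sin_sub r a b

end sinRatioWeight

theorem arccos_sqrt_div_two_mem_Ioo {q : ℝ} (hq0 : 0 < q) (hq4 : q < 4) :
    arccos (√q / 2) ∈ Ioo 0 (π / 2) :=
  ⟨arccos_pos.2 (by linarith [(sqrt_lt' two_pos).2 (by linarith : q < 2 ^ 2)]),
    arccos_lt_pi_div_two.2 (by positivity)⟩

theorem two_mul_cos_arccos_sqrt_div_two {q : ℝ} (hq4 : q ≤ 4) :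
    2 * cos (arccos (√q / 2)) = √q := by
  have : √q ≤ 2 := sqrt_le_iff.2 ⟨zero_le_two, by linarith⟩
  rw [cos_arccos (by linarith [sqrt_nonneg q]) (by linarith)]
  ring

/-- Uniqueness of the isoradial weight function: for 0 < q < 4, any continuous positive
function f on (0, π/2) satisfying the duality relation f(θ)·f(π/2-θ) = q and the Y–Δ
solvability relation f(θ_a)f(θ_b) + f(θ_a)f(θ_c) + f(θ_b)f(θ_c) + f(θ_a)f(θ_b)f(θ_c) = q
whenever θ_a + θ_b + θ_c = π/2, is given by
f(θ) = √q·sin((2r/π)θ)/sin((2r/π)(π/2-θ)) with r = arccos(√q/2). -/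
theorem isoradialWeight_unique (q : ℝ) (hq0 : 0 < q) (hq4 : q < 4) (f : ℝ → ℝ)
    (hpos : ∀ θ ∈ Set.Ioo 0 (Real.pi / 2), 0 < f θ)
    (hcont : ContinuousOn f (Set.Ioo 0 (Real.pi / 2)))
    (hdual : ∀ θ ∈ Set.Ioo 0 (Real.pi / 2), f θ * f (Real.pi / 2 - θ) = q)
    (hydelta : ∀ θa ∈ Set.Ioo 0 (Real.pi / 2), ∀ θb ∈ Set.Ioo 0 (Real.pi / 2),
      ∀ θc ∈ Set.Ioo 0 (Real.pi / 2), θa + θb + θc = Real.pi / 2 →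
      f θa * f θb + f θa * f θc + f θb * f θc + f θa * f θb * f θc = q) :
    ∀ θ ∈ Set.Ioo 0 (Real.pi / 2),
      f θ = Real.sqrt q *
        Real.sin ((2 * Real.arccos (Real.sqrt q / 2) / Real.pi) * θ) /
        Real.sin ((2 * Real.arccos (Real.sqrt q / 2) / Real.pi) * (Real.pi / 2 - θ)) := by
  obtain ⟨hr0, hr⟩ := arccos_sqrt_div_two_mem_Ioo hq0 hq4
  have hcos := two_mul_cos_arccos_sqrt_div_two hq4.le
  set r := arccos (√q / 2)
  set k := 2 * r / π
  have hkL : k * (π / 2) = r := by simp only [k]; field_simp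
  have hmaps : MapsTo (k * ·) (Ioo 0 (π / 2)) (Ioo 0 r) := fun θ hθ =>
    ⟨by positivity [hθ.1], hkL ▸ mul_lt_mul_of_pos_left hθ.2 (by positivity)⟩
  have hlaw : HasAdditionLaw q (π / 2) fun θ => sinRatioWeight r (k * θ) := by
    rw [← sq_sqrt hq0.le, ← hcos]
    exact (hasAdditionLaw_sinRatioWeight (by linarith)).comp_mul (by positivity) hkL
  have hmid : f (π / 2 / 2) = sinRatioWeight r (k * (π / 2 / 2)) := by
    have h := hdual (π / 2 / 2) ⟨by positivity, by linarith [pi_pos]⟩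
    rw [sub_half] at h
    rw [← mul_div_assoc, hkL, sinRatioWeight_half hr0 (by linarith), hcos, ← h,
      sqrt_mul_self (hpos _ ⟨by positivity, by linarith [pi_pos]⟩).le]
  intro θ hθ
  rw [(hasAdditionLaw_of_dual hdual hydelta).eqOn hq0 hlaw hpos
    (fun _ hx => sinRatioWeight_pos hr (hmaps hx)) hcont
    ((continuousOn_sinRatioWeight (by linarith)).comp (continuousOn_const.mul continuousOn_id) hmaps)
    hmid hθ]
  simp only [sinRatioWeight, hcos, mul_sub, hkL]
end
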